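/- For every triangle-free graph G on n vertices and every l ≥ 1, the number of matchings of size l in G (i.e., sets of l pairwise disjoint edges) is at most (1/l!) · ∏_{i=0}^{l-1} ⌊(n-2i)²/4⌋. -/

import Mathlib

open SimpleGraph

universe u v

/-- An (injective) copy of the graph `F` inside the graph `G`. -/
structure GraphCopy {α : Type u} {β : Type v} (F : SimpleGraph α) (G : SimpleGraph β) where
  toFun : α → β
  inj : Function.Injective toFun
  adj : ∀ {a b : α}, F.Adj a b → G.Adj (toFun a) (toFun b)

/-- `G` contains a copy of `F` (i.e. a subgraph isomorphic to `F`). -/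
def Contains {α : Type u} {β : Type v} (F : SimpleGraph α) (G : SimpleGraph β) : Prop :=
  Nonempty (GraphCopy F G)

/-- `G` contains `k` pairwise vertex-disjoint copies of `F`. -/
def HasDisjCopies {α : Type u} {β : Type v} (F : SimpleGraph α) (G : SimpleGraph β)
    (k : ℕ) : Prop :=
  ∃ c : Fin k → GraphCopy F G,
    ∀ i j : Fin k, i ≠ j → Disjoint (Set.range (c i).toFun) (Set.range (c j).toFun)

/-- The join of two graphs: their disjoint union together with all cross edges. -/
def gJoin {α : Type u} {β : Type v} (G : SimpleGraph α) (H : SimpleGraph β) :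
    SimpleGraph (α ⊕ β) where
  Adj x y :=
    match x, y with
    | Sum.inl a, Sum.inl b => G.Adj a b
    | Sum.inr a, Sum.inr b => H.Adj a b
    | _, _ => True
  symm := ⟨by rintro (a | a) (b | b) h <;> first | exact h.symm | trivial⟩
  loopless := ⟨by rintro (a | a) h; exacts [G.irrefl (v := a) h, H.irrefl (v := a) h]⟩

/-- The Turán number: maximum number of edges of an `n`-vertex `F`-free graph. -/
noncomputable def exNum {α : Type u} (n : ℕ) (F : SimpleGraph α) : ℕ :=
  sSup {m : ℕ | ∃ G : SimpleGraph (Fin n), ¬ Contains F G ∧ m = G.edgeSet.ncard}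

/-- The number of (unlabeled) copies of `H` in `G`, i.e. the number of subgraphs of `G`
isomorphic to `H`. -/
noncomputable def copyCount {α : Type u} {β : Type v} (H : SimpleGraph α)
    (G : SimpleGraph β) : ℕ :=
  {A : G.Subgraph | Nonempty (H ≃g A.coe)}.ncard

/-- The generalized Turán number: maximum number of copies of `H` in an
`n`-vertex `F`-free graph. -/
noncomputable def exGen {α : Type u} {γ : Type v} (n : ℕ) (H : SimpleGraph α)
    (F : SimpleGraph γ) : ℕ :=
  sSup {m : ℕ | ∃ G : SimpleGraph (Fin n), ¬ Contains F G ∧ m = copyCount H G}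

/-- `s` is a matching in `G`: a set of edges of `G`, pairwise vertex-disjoint. -/
def IsMatchingSet {V : Type u} (G : SimpleGraph V) (s : Finset (Sym2 V)) : Prop :=
  ↑s ⊆ G.edgeSet ∧ ∀ e ∈ s, ∀ f ∈ s, e ≠ f → ∀ x : V, x ∈ e → x ∉ f

/-- The number of matchings of size `l` in `G`. -/
noncomputable def matchCount {V : Type u} (G : SimpleGraph V) (l : ℕ) : ℕ :=
  {s : Finset (Sym2 V) | s.card = l ∧ IsMatchingSet G s}.ncard

/-- `G` contains `k` pairwise vertex-disjoint triangles. -/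
def HasDisjTriangles {V : Type u} (G : SimpleGraph V) (k : ℕ) : Prop :=
  ∃ S : Finset (Finset V), S.card = k ∧ (∀ T ∈ S, G.IsNClique 3 T) ∧
    (S : Set (Finset V)).Pairwise fun T T' => Disjoint T T'

/-- The number of copies of `lK₃` (families of `l` pairwise disjoint triangles) in `G`. -/
noncomputable def disjTriFamCount {V : Type u} (G : SimpleGraph V) (l : ℕ) : ℕ :=
  {S : Finset (Finset V) | S.card = l ∧ (∀ T ∈ S, G.IsNClique 3 T) ∧
    (S : Set (Finset V)).Pairwise fun T T' => Disjoint T T'}.ncard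

/-! Double counting: a matching of size `l + 1` contains `l + 1` matchings of size `l`, while a
matching `M` of size `l` grows to one of size `l + 1` only by an edge avoiding the `2l` vertices
of `M`. Those edges form a triangle-free graph on `n - 2l` vertices, so by Mantel there are at
most `⌊(n - 2l)² / 4⌋` of them. Hence `m(l + 1) · (l + 1) ≤ m(l) · ⌊(n - 2l)² / 4⌋`. -/

open Finset

section

variable {V : Type*} {G : SimpleGraph V}

namespace SimpleGraph.CliqueFree

theorem card_edgeFinset_le_sq_div_four [Fintype V] [DecidableRel G.Adj]
    (hG : G.CliqueFree 3) : #G.edgeFinset ≤ Fintype.card V ^ 2 / 4 := by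
  have h : #G.edgeFinset ≤ (Fintype.card V ^ 2 - (Fintype.card V % 2) ^ 2) * 1 / 4
      + (Fintype.card V % 2).choose 2 := hG.card_edgeFinset_le
  rw [Nat.choose_eq_zero_of_lt (Nat.mod_lt _ two_pos), add_zero, mul_one] at h
  exact h.trans (Nat.div_le_div_right (Nat.sub_le _ _))

theorem card_edgeFinset_filter_disjoint_le [Fintype V] [DecidableEq V] [DecidableRel G.Adj]
    (hG : G.CliqueFree 3) (W : Finset V) :
    #{e ∈ G.edgeFinset | Disjoint e.toFinset W} ≤ (Fintype.card V - #W) ^ 2 / 4 := by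
  let T : Set V := (↑W)ᶜ
  calc #{e ∈ G.edgeFinset | Disjoint e.toFinset W}
      ≤ #((G.induce T).edgeFinset.map (Function.Embedding.subtype (· ∈ T)).sym2Map) := by
        refine card_le_card fun e he => ?_
        induction e using Sym2.ind with
        | _ a b =>
          simp only [mem_filter, mem_edgeFinset, mem_edgeSet, Sym2.toFinset_mk_eq,
            disjoint_insert_left, disjoint_singleton_left] at he
          exact mem_map.2 ⟨s(⟨a, he.2.1⟩, ⟨b, he.2.2⟩), by simpa using he.1, rfl⟩
    _ = #(G.induce T).edgeFinset := card_map _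
    _ ≤ Fintype.card T ^ 2 / 4 :=
        (hG.comap (Embedding.induce T).isContained).card_edgeFinset_le_sq_div_four
    _ = (Fintype.card V - #W) ^ 2 / 4 := by
        rw [Fintype.card_compl_set]; simp

end SimpleGraph.CliqueFree

namespace IsMatchingSet

variable {s t : Finset (Sym2 V)}

theorem mono (hs : IsMatchingSet G s) (hts : t ⊆ s) : IsMatchingSet G t :=
  ⟨(Finset.coe_subset.2 hts).trans hs.1, fun e he f hf => hs.2 e (hts he) f (hts hf)⟩

theorem card_biUnion_toFinset [DecidableEq V] (hs : IsMatchingSet G s) :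
    #(s.biUnion Sym2.toFinset) = 2 * #s := by
  rw [card_biUnion, sum_const_nat, mul_comm]
  · exact fun e he => Sym2.card_toFinset_of_not_isDiag e (not_isDiag_of_mem_edgeSet G (hs.1 he))
  · exact fun e he f hf hef => disjoint_left.2 fun x hxe hxf =>
      hs.2 e he f hf hef x (Sym2.mem_toFinset.1 hxe) (Sym2.mem_toFinset.1 hxf)

theorem mem_image_insert [Fintype V] [DecidableEq V] [DecidableRel G.Adj]
    (hs : IsMatchingSet G s) (hts : t ⊆ s) (hcard : #s = #t + 1) :
    s ∈ {e ∈ G.edgeFinset | Disjoint e.toFinset (t.biUnion Sym2.toFinset)}.image (insert · t) := by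
  obtain ⟨e, het, rfl⟩ := exists_eq_insert_iff.2 ⟨hts, hcard.symm⟩
  have hes : e ∈ insert e t := mem_insert_self e t
  refine mem_image.2 ⟨e, mem_filter.2 ⟨G.mem_edgeFinset.2 (hs.1 hes),
    disjoint_left.2 fun x hx hxt => ?_⟩, rfl⟩
  obtain ⟨f, hft, hxf⟩ := mem_biUnion.1 hxt
  exact hs.2 e hes f (mem_insert_of_mem hft) (ne_of_mem_of_not_mem hft het).symm x
    (Sym2.mem_toFinset.1 hx) (Sym2.mem_toFinset.1 hxf)

end IsMatchingSet

variable [Fintype V]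

open Classical in
variable (G) in
noncomputable def matchings (l : ℕ) : Finset (Finset (Sym2 V)) :=
  {s | #s = l ∧ IsMatchingSet G s}

theorem mem_matchings {l : ℕ} {s : Finset (Sym2 V)} :
    s ∈ matchings G l ↔ #s = l ∧ IsMatchingSet G s := by
  simp [matchings]

theorem matchCount_eq_card_matchings (l : ℕ) : matchCount G l = #(matchings G l) := by
  rw [matchCount, ← Set.ncard_coe_finset]
  congr 1
  ext s
  simp [mem_matchings]

theorem matchings_zero : matchings G 0 = {∅} := by
  ext s
  simp only [mem_matchings, card_eq_zero, mem_singleton, and_iff_left_iff_imp]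
  rintro rfl
  simp [IsMatchingSet]

theorem card_matchings_succ_mul_le (hG : G.CliqueFree 3) (l : ℕ) :
    #(matchings G (l + 1)) * (l + 1) ≤ #(matchings G l) * ((Fintype.card V - 2 * l) ^ 2 / 4) := by
  classical
  refine card_mul_le_card_mul (fun s t => t ⊆ s) (fun s hs => ?_) (fun t ht => ?_)
  · obtain ⟨hcard, hs⟩ := mem_matchings.1 hs
    calc l + 1 = #(s.powersetCard l) := by
          rw [card_powersetCard, hcard, Nat.choose_succ_self_right]
      _ ≤ #(bipartiteAbove (fun s t => t ⊆ s) (matchings G l) s) := by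
          refine card_le_card fun t ht => ?_
          obtain ⟨hts, htl⟩ := mem_powersetCard.1 ht
          exact mem_filter.2 ⟨mem_matchings.2 ⟨htl, hs.mono hts⟩, hts⟩
  · obtain ⟨hcard, ht⟩ := mem_matchings.1 ht
    have hbound := hG.card_edgeFinset_filter_disjoint_le (t.biUnion Sym2.toFinset)
    rw [ht.card_biUnion_toFinset, hcard] at hbound
    refine (card_le_card fun s hs => ?_).trans ((card_image_le (f := (insert · t))).trans hbound)
    obtain ⟨hs, hts⟩ := mem_filter.1 hs
    obtain ⟨hscard, hs⟩ := mem_matchings.1 hs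
    exact hs.mem_image_insert hts (by rw [hscard, hcard])

end

/-- A triangle-free graph on `n` vertices has at most
`(1/l!) ∏_{i<l} ⌊(n-2i)²/4⌋` matchings of size `l`. -/
theorem stmt3 {V : Type u} [Fintype V] (G : SimpleGraph V) (hG : G.CliqueFree 3)
    (l n : ℕ) (hn : n = Fintype.card V) :
    matchCount G l * l.factorial ≤ ∏ i ∈ Finset.range l, (n - 2 * i) ^ 2 / 4 := by
  subst hn
  rw [matchCount_eq_card_matchings]
  induction l with
  | zero => simp [matchings_zero]
  | succ l ih =>
    calc #(matchings G (l + 1)) * (l + 1).factorial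
        = #(matchings G (l + 1)) * (l + 1) * l.factorial := by
          rw [Nat.factorial_succ, mul_assoc]
      _ ≤ #(matchings G l) * ((Fintype.card V - 2 * l) ^ 2 / 4) * l.factorial :=
          Nat.mul_le_mul_right _ (card_matchings_succ_mul_le hG l)
      _ = #(matchings G l) * l.factorial * ((Fintype.card V - 2 * l) ^ 2 / 4) := by ring
      _ ≤ ∏ i ∈ range (l + 1), (Fintype.card V - 2 * i) ^ 2 / 4 := by
          rw [prod_range_succ]; gcongr
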